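/- In addition to the hypotheses of the error-bound theorem (orthogonal nonzero columns, s = |{j : β⋆_j ≠ 0}| with log s ≥ 1, c₀ > 2, z⋆ = c₀ log p, c = min_j ‖x_j‖²/n, M = 4(2+c₀)/c, and β̃ the explicit thresholded SBL estimator), assume min_{j : β⋆_j ≠ 0} |β⋆_j| > sqrt(M σ² s log(p)/n). Then P[ sign(β̃) = sign(β⋆) ] ≥ 1 − p^{−c₀ s/8} − e^{−s} − p^{−(c₀/2 − 1)}, where sign(u) ∈ {−1,0,1}^p records the coordinatewise sign of u. -/

import Mathlib

/-!
With `g_j = ⟨ε, x_j⟩ ~ N(0, ‖x_j‖²σ²)`, orthogonality gives `⟨Y, x_j⟩ = ‖x_j‖² β⋆_j + g_j`.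
Let `u_j² = 1 + z⋆` on the null coordinates and `u_j² = (2 + c₀) s log p` on the support. When
`|g_j| < ‖x_j‖ σ u_j` for all `j`, the threshold removes every null coordinate and, by the beta-min
condition, keeps every active one, whose estimate has the sign of `⟨Y, x_j⟩` because the correction
`σ²/⟨Y, x_j⟩` is smaller than `⟨Y, x_j⟩/‖x_j‖²` in absolute value. The Mills-ratio bound
`P(|Z| ≥ u) ≤ (4/5) e^{-u²/2}` for `u ≥ 1` and a union bound leave a failure probability of at most
`p^{-(c₀/2-1)} + p^{-c₀ s/8}`.
-/

open Matrix MeasureTheory ProbabilityTheory Real Set Filter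
open scoped ENNReal NNReal Topology

lemma integrable_mul_exp_neg_sq_div_two : Integrable fun y : ℝ => y * exp (-y ^ 2 / 2) := by
  simpa [div_eq_inv_mul] using integrable_mul_exp_neg_mul_sq (b := 1 / 2) one_half_pos

lemma integral_Ioi_mul_exp_neg_sq_div_two (u : ℝ) :
    ∫ y in Ioi u, y * exp (-y ^ 2 / 2) = exp (-u ^ 2 / 2) := by
  have hderiv (y : ℝ) : HasDerivAt (fun y => -exp (-y ^ 2 / 2)) (y * exp (-y ^ 2 / 2)) y := by
    have h : HasDerivAt (fun y : ℝ => -y ^ 2 / 2) (-y) y := by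
      simpa [neg_div] using ((hasDerivAt_pow 2 y).div_const 2).fun_neg
    exact (h.exp.fun_neg).congr_deriv (by ring)
  have hlim : Tendsto (fun y : ℝ => -exp (-y ^ 2 / 2)) atTop (𝓝 0) := by
    have h : Tendsto (fun y : ℝ => -y ^ 2 / 2) atTop atBot := by
      simp_rw [neg_div]
      exact tendsto_neg_atTop_atBot.comp
        ((tendsto_pow_atTop two_ne_zero).atTop_div_const two_pos)
    simpa using (tendsto_exp_atBot.comp h).neg
  rw [integral_Ioi_of_hasDerivAt_of_tendsto (by fun_prop : Continuous _).continuousWithinAt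
    (fun y _ => hderiv y) integrable_mul_exp_neg_sq_div_two.integrableOn hlim]
  ring

lemma gaussianReal_zero_one_Ici_le (u : ℝ) (hu : 0 < u) :
    gaussianReal 0 1 (Ici u) ≤ ENNReal.ofReal (exp (-u ^ 2 / 2) / (u * √(2 * π))) := by
  rw [gaussianReal_apply_eq_integral 0 one_ne_zero, integral_Ici_eq_integral_Ioi]
  refine ENNReal.ofReal_le_ofReal ?_
  calc ∫ y in Ioi u, gaussianPDFReal 0 1 y
      ≤ ∫ y in Ioi u, (u * √(2 * π))⁻¹ * (y * exp (-y ^ 2 / 2)) := by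
        refine setIntegral_mono_on (integrable_gaussianPDFReal 0 1).integrableOn ?_
          measurableSet_Ioi fun y hy => ?_
        · exact (integrable_mul_exp_neg_sq_div_two.const_mul _).integrableOn
        · have hy : u ≤ y := le_of_lt hy
          rw [gaussianPDFReal_def]
          simp only [NNReal.coe_one, mul_one, sub_zero, mul_inv, ← mul_assoc]
          have hratio : 1 ≤ u⁻¹ * y := by rwa [inv_mul_eq_div, one_le_div hu]
          nlinarith [mul_le_mul_of_nonneg_right hratio
            (by positivity : 0 ≤ (√(2 * π))⁻¹ * exp (-y ^ 2 / 2))]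
    _ = exp (-u ^ 2 / 2) / (u * √(2 * π)) := by
        rw [integral_const_mul, integral_Ioi_mul_exp_neg_sq_div_two, inv_mul_eq_div]

lemma gaussianReal_zero_one_le_abs_le (u : ℝ) (hu : 1 ≤ u) :
    gaussianReal 0 1 {y | u ≤ |y|} ≤ ENNReal.ofReal (4 / 5 * exp (-u ^ 2 / 2)) := by
  have hsplit : {y : ℝ | u ≤ |y|} = Ici u ∪ (fun y => -y) ⁻¹' Ici u := by
    ext y
    simp only [mem_ofPred_eq, mem_union, mem_Ici, mem_preimage, le_abs', le_neg]
    tauto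
  have hsymm : gaussianReal 0 1 ((fun y => -y) ⁻¹' Ici u) = gaussianReal 0 1 (Ici u) := by
    rw [← Measure.map_apply measurable_neg measurableSet_Ici, gaussianReal_map_neg, neg_zero]
  have hsqrt : 5 / 2 ≤ u * √(2 * π) := by
    have : 5 / 2 ≤ √(2 * π) := Real.le_sqrt_of_sq_le (by nlinarith [pi_gt_d2])
    nlinarith
  calc gaussianReal 0 1 {y | u ≤ |y|}
      ≤ gaussianReal 0 1 (Ici u) + gaussianReal 0 1 (Ici u) := by
        rw [hsplit]
        exact (measure_union_le _ _).trans_eq (by rw [hsymm])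
    _ ≤ ENNReal.ofReal (2 * (exp (-u ^ 2 / 2) / (u * √(2 * π)))) := by
        rw [two_mul, ENNReal.ofReal_add (by positivity) (by positivity)]
        gcongr <;> exact gaussianReal_zero_one_Ici_le u (by linarith)
    _ ≤ ENNReal.ofReal (4 / 5 * exp (-u ^ 2 / 2)) := by
        refine ENNReal.ofReal_le_ofReal ?_
        rw [mul_div_assoc', div_le_iff₀ (by linarith)]
        nlinarith [exp_pos (-u ^ 2 / 2)]

lemma gaussianReal_sqrt_mul_le_abs_le {V : ℝ≥0} (hV : V ≠ 0) (u : ℝ) (hu : 1 ≤ u) :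
    gaussianReal 0 V {y | √V * u ≤ |y|} ≤ ENNReal.ofReal (4 / 5 * exp (-u ^ 2 / 2)) := by
  have hsqrt : 0 < √(V : ℝ) := sqrt_pos.mpr (NNReal.coe_pos.mpr (pos_iff_ne_zero.mpr hV))
  have hscale : (gaussianReal 0 1).map (√(V : ℝ) * ·) = gaussianReal 0 V := by
    rw [gaussianReal_map_const_mul, mul_zero, mul_one]
    congr
    exact sq_sqrt V.2
  rw [← hscale, Measure.map_apply (by fun_prop) (measurableSet_le (by fun_prop) (by fun_prop))]
  convert gaussianReal_zero_one_le_abs_le u hu using 3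
  ext y
  simp only [mem_preimage, mem_ofPred_eq, abs_mul, abs_of_pos hsqrt, mul_le_mul_iff_right₀ hsqrt]

lemma measurable_dotProduct_right {ι : Type*} [Fintype ι] (v : ι → ℝ) :
    Measurable fun w : ι → ℝ => v ⬝ᵥ w := by
  unfold dotProduct
  fun_prop

lemma dotProduct_self_pos {ι : Type*} [Fintype ι] {v : ι → ℝ} (hv : v ≠ 0) : 0 < v ⬝ᵥ v := by
  simpa using dotProduct_star_self_pos_iff.mpr hv

lemma map_dotProduct_pi_gaussianReal {ι : Type*} [Fintype ι] (σ2 : ℝ≥0) (v : ι → ℝ) :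
    (Measure.pi fun _ : ι => gaussianReal 0 σ2).map (fun ε => v ⬝ᵥ ε)
      = gaussianReal 0 ((v ⬝ᵥ v).toNNReal * σ2) := by
  have hcoord (t : ℝ) (i : ι) :
      ∫ y, Complex.exp (t * (v i * y : ℝ) * Complex.I) ∂gaussianReal 0 σ2
        = Complex.exp (-(σ2 * (t * v i) ^ 2 / 2)) := by
    have := charFun_gaussianReal (μ := 0) (v := σ2) (t * v i)
    rw [charFun_apply_real] at this
    push_cast at this ⊢
    simp_rw [← mul_assoc, this]
    ring_nf
  refine Measure.ext_of_charFun (funext fun t => ?_)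
  rw [charFun_apply_real, integral_map (measurable_dotProduct_right v).aemeasurable (by fun_prop),
    charFun_gaussianReal, NNReal.coe_mul,
    Real.coe_toNNReal _ (by simpa using dotProduct_self_star_nonneg v)]
  simp_rw [dotProduct, Complex.ofReal_sum, Finset.mul_sum, Finset.sum_mul, Complex.exp_sum]
  rw [integral_fintype_prod_eq_prod (f := fun i y => Complex.exp (t * (v i * y : ℝ) * Complex.I))]
  simp_rw [hcoord, ← Complex.exp_sum]
  push_cast
  congr 1
  simp only [mul_zero, zero_mul, zero_sub, Finset.sum_mul, Finset.sum_div,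
    ← Finset.sum_neg_distrib]
  exact Finset.sum_congr rfl fun i _ => by ring

lemma pi_gaussianReal_sqrt_mul_le_abs_dotProduct_le {ι : Type*} [Fintype ι] {σ2 : ℝ≥0}
    (hσ : σ2 ≠ 0) {v : ι → ℝ} (hv : v ≠ 0) (u : ℝ) (hu : 1 ≤ u) :
    Measure.pi (fun _ : ι => gaussianReal 0 σ2) {ε | √((v ⬝ᵥ v) * σ2) * u ≤ |v ⬝ᵥ ε|}
      ≤ ENNReal.ofReal (4 / 5 * exp (-u ^ 2 / 2)) := by
  have hvv : 0 < v ⬝ᵥ v := dotProduct_self_pos hv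
  have hV : (v ⬝ᵥ v).toNNReal * σ2 ≠ 0 := mul_ne_zero (by simpa using hvv) hσ
  have := gaussianReal_sqrt_mul_le_abs_le hV u hu
  rwa [← map_dotProduct_pi_gaussianReal, Measure.map_apply (measurable_dotProduct_right v)
    (measurableSet_le (by fun_prop) (by fun_prop)), NNReal.coe_mul,
    Real.coe_toNNReal _ hvv.le] at this

lemma ofReal_one_sub_le_measure_iInter {Ω ι : Type*} [MeasurableSpace Ω] [Fintype ι]
    (μ : Measure Ω) [IsProbabilityMeasure μ] (A : ι → Set Ω) {δ : ℝ} (hδ : 0 ≤ δ)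
    (h : ∑ i, μ (A i)ᶜ ≤ ENNReal.ofReal δ) : ENNReal.ofReal (1 - δ) ≤ μ (⋂ i, A i) := by
  have hcompl : μ (⋂ i, A i)ᶜ ≤ ENNReal.ofReal δ := by
    rw [compl_iInter]
    exact (measure_iUnion_fintype_le μ _).trans h
  have hcover : 1 ≤ μ (⋂ i, A i) + μ (⋂ i, A i)ᶜ := by
    rw [← measure_univ (μ := μ), ← union_compl_self (⋂ i, A i)]
    exact measure_union_le _ _
  rw [ENNReal.ofReal_sub _ hδ, ENNReal.ofReal_one, tsub_le_iff_right]
  exact hcover.trans (by gcongr)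

lemma ofReal_one_sub_sum_le_pi_gaussianReal_iInter {ι κ : Type*} [Fintype ι] [Fintype κ]
    {σ2 : ℝ≥0} (hσ : σ2 ≠ 0) (v : κ → ι → ℝ) (hv : ∀ k, v k ≠ 0) (q : κ → ℝ)
    (hq : ∀ k, 1 ≤ q k) :
    ENNReal.ofReal (1 - ∑ k, 4 / 5 * exp (-q k / 2)) ≤
      Measure.pi (fun _ : ι => gaussianReal 0 σ2)
        (⋂ k, {ε | |v k ⬝ᵥ ε| < √((v k ⬝ᵥ v k) * σ2) * √(q k)}) := by
  refine ofReal_one_sub_le_measure_iInter _ _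
    (Finset.sum_nonneg fun k _ => by positivity) ?_
  rw [ENNReal.ofReal_sum_of_nonneg fun k _ => by positivity]
  refine Finset.sum_le_sum fun k _ => ?_
  have := pi_gaussianReal_sqrt_mul_le_abs_dotProduct_le hσ (hv k) (√(q k))
    (one_le_sqrt.mpr (hq k))
  rw [sq_sqrt (zero_le_one.trans (hq k))] at this
  refine (measure_mono fun ε hε => ?_).trans this
  simpa using hε

lemma dotProduct_mulVec_of_orthogonal_cols {m n : Type*} [Fintype m] [Fintype n]
    (X : Matrix m n ℝ) (horth : ∀ j k, j ≠ k → Xᵀ j ⬝ᵥ Xᵀ k = 0) (β : n → ℝ) (j : n) :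
    Xᵀ j ⬝ᵥ X *ᵥ β = (Xᵀ j ⬝ᵥ Xᵀ j) * β j := by
  rw [dotProduct_mulVec, ← transpose_transpose X, vecMul_transpose, transpose_transpose, dotProduct,
    Finset.sum_eq_single j (fun k _ hk => by rw [mulVec, horth k j hk, zero_mul]) (by simp)]
  rfl

/-- `thresholdedSBL σ² ‖x_j‖² (1 + z⋆) ⟨Y, x_j⟩` is the coordinate `β̃_j`. -/
noncomputable def thresholdedSBL (σ2 N t T : ℝ) : ℝ :=
  if σ2 * N * t < T ^ 2 then T / N - σ2 / T else 0

lemma sign_thresholdedSBL_of_lt {σ2 N t T : ℝ} (hσ : 0 ≤ σ2) (hN : 0 < N) (ht : 1 ≤ t)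
    (hT : σ2 * N * t < T ^ 2) : sign (thresholdedSBL σ2 N t T) = sign T := by
  have hT0 : T ≠ 0 := by
    rintro rfl
    nlinarith [mul_nonneg (mul_nonneg hσ hN.le) (zero_le_one.trans ht)]
  have hnum : 0 < T ^ 2 - σ2 * N := by nlinarith [mul_nonneg hσ hN.le]
  have hval : thresholdedSBL σ2 N t T = (T ^ 2 - σ2 * N) / (N * T) := by
    rw [thresholdedSBL, if_pos hT]
    field_simp
  rw [hval]
  rcases hT0.lt_or_gt with hneg | hpos
  · rw [sign_of_neg hneg,
      sign_of_neg (div_neg_of_pos_of_neg hnum (mul_neg_of_pos_of_neg hN hneg))]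
  · rw [sign_of_pos hpos, sign_of_pos (div_pos hnum (mul_pos hN hpos))]

lemma sign_thresholdedSBL_mul_add {σ2 N t b g : ℝ} (hσ : 0 ≤ σ2) (hN : 0 < N) (ht : 1 ≤ t)
    (hg : |g| + √(σ2 * N * t) < N * |b|) :
    sign (thresholdedSBL σ2 N t (N * b + g)) = sign b := by
  have habs : √(σ2 * N * t) < |N * b + g| := by
    have := abs_sub_abs_le_abs_sub (N * b) (-g)
    rw [abs_mul, abs_of_pos hN, abs_neg, sub_neg_eq_add] at this
    linarith
  rw [sign_thresholdedSBL_of_lt hσ hN ht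
    ((sqrt_lt' ((sqrt_nonneg _).trans_lt habs)).mp habs |>.trans_eq (sq_abs _))]
  have hsqrt := sqrt_nonneg (σ2 * N * t)
  rcases lt_trichotomy b 0 with hb | rfl | hb
  · rw [abs_of_neg hb] at hg
    rw [sign_of_neg hb, sign_of_neg (by linarith [le_abs_self g])]
  · rw [abs_zero, mul_zero] at hg
    linarith [abs_nonneg g]
  · rw [abs_of_pos hb] at hg
    rw [sign_of_pos hb, sign_of_pos (by linarith [neg_abs_le g])]

lemma sign_thresholdedSBL_of_abs_lt {σ2 N t κ b g : ℝ} (hσ : 0 ≤ σ2) (hN : 0 < N) (ht : 1 ≤ t)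
    (htκ : t ≤ κ) (hb : b ≠ 0 → 2 * (√(N * σ2) * √κ) < N * |b|)
    (hg : |g| < √(N * σ2) * √(if b = 0 then t else κ)) :
    sign (thresholdedSBL σ2 N t (N * b + g)) = sign b := by
  have hsplit : √(σ2 * N * t) = √(N * σ2) * √t := by rw [← sqrt_mul (by positivity), mul_comm σ2]
  by_cases hb0 : b = 0
  · rw [if_pos hb0, ← hsplit] at hg
    have hsq : ¬ σ2 * N * t < (N * b + g) ^ 2 := by
      rw [hb0, mul_zero, zero_add, ← sq_abs, not_lt]
      exact ((lt_sqrt (abs_nonneg g)).mp hg).le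
    rw [thresholdedSBL, if_neg hsq, hb0, sign_zero]
  · rw [if_neg hb0] at hg
    have ht' : √(N * σ2) * √t ≤ √(N * σ2) * √κ := by gcongr
    exact sign_thresholdedSBL_mul_add hσ hN ht (by linarith [hb hb0])

lemma sign_thresholdedSBL_dotProduct_eq {m ι : Type*} [Fintype m] [Fintype ι]
    (X : Matrix m ι ℝ) (horth : ∀ j k, j ≠ k → Xᵀ j ⬝ᵥ Xᵀ k = 0) (hX : ∀ j, Xᵀ j ≠ 0)
    {σ2 t κ : ℝ} (hσ : 0 ≤ σ2) (ht : 1 ≤ t) (htκ : t ≤ κ) {β : ι → ℝ}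
    (hβ : ∀ j, β j ≠ 0 → 2 * (√((Xᵀ j ⬝ᵥ Xᵀ j) * σ2) * √κ) < (Xᵀ j ⬝ᵥ Xᵀ j) * |β j|)
    {ε : m → ℝ}
    (hε : ∀ j, |Xᵀ j ⬝ᵥ ε| < √((Xᵀ j ⬝ᵥ Xᵀ j) * σ2) * √(if β j = 0 then t else κ)) (j : ι) :
    sign (thresholdedSBL σ2 (Xᵀ j ⬝ᵥ Xᵀ j) t (Xᵀ j ⬝ᵥ (X *ᵥ β + ε))) = sign (β j) := by
  rw [dotProduct_add, dotProduct_mulVec_of_orthogonal_cols X horth]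
  exact sign_thresholdedSBL_of_abs_lt hσ (dotProduct_self_pos (hX j)) ht htκ (hβ j) (hε j)

lemma two_mul_sqrt_mul_lt_of_sqrt_lt {N v κ C b : ℝ} (hC : 0 < C) (hCN : C ≤ N) (hv : 0 ≤ v)
    (hκ : 0 ≤ κ) (hb : √(4 * κ * v / C) < |b|) : 2 * (√(N * v) * √κ) < N * |b| := by
  have hN : 0 < N := hC.trans_le hCN
  have hb2 : 4 * κ * v / C < |b| ^ 2 := (sqrt_lt' ((sqrt_nonneg _).trans_lt hb)).mp hb
  have hNC : N * (4 * κ * v) ≤ N ^ 2 * (4 * κ * v / C) := by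
    rw [mul_div_assoc', le_div_iff₀ hC]
    nlinarith [mul_le_mul_of_nonneg_left hCN (by positivity : 0 ≤ N * (4 * κ * v))]
  refine lt_of_pow_lt_pow_left₀ 2 (by positivity) ?_
  calc (2 * (√(N * v) * √κ)) ^ 2 = N * (4 * κ * v) := by
        rw [mul_pow, mul_pow, sq_sqrt (by positivity), sq_sqrt hκ]; ring
    _ ≤ N ^ 2 * (4 * κ * v / C) := hNC
    _ < (N * |b|) ^ 2 := by rw [mul_pow]; gcongr

lemma mul_exp_neg_one_add_mul_log_le_rpow {p c₀ : ℝ} (hp : 0 < p) :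
    p * (4 / 5 * exp (-(1 + c₀ * log p) / 2)) ≤ p ^ (-(c₀ / 2 - 1)) := by
  rw [rpow_def_of_pos hp]
  calc p * (4 / 5 * exp (-(1 + c₀ * log p) / 2))
      = 4 / 5 * exp (log p + -(1 + c₀ * log p) / 2) := by rw [exp_add, exp_log hp]; ring
    _ ≤ exp (log p + -(1 + c₀ * log p) / 2) := by
        linarith [exp_pos (log p + -(1 + c₀ * log p) / 2)]
    _ ≤ exp (log p * -(c₀ / 2 - 1)) := exp_le_exp.mpr (by linarith)

lemma mul_exp_neg_two_add_mul_le_exp {s L c₀ : ℝ} (hs : 1 ≤ s) (hL : 1 ≤ L) (hc₀ : 0 ≤ c₀) :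
    s * (4 / 5 * exp (-((2 + c₀) * s * L) / 2)) ≤ exp (L * (-(c₀ * s) / 8)) := by
  calc s * (4 / 5 * exp (-((2 + c₀) * s * L) / 2))
      ≤ exp s * exp (-((2 + c₀) * s * L) / 2) := by
        nlinarith [add_one_le_exp s, exp_pos (-((2 + c₀) * s * L) / 2)]
    _ = exp (s + -((2 + c₀) * s * L) / 2) := (exp_add _ _).symm
    _ ≤ exp (L * (-(c₀ * s) / 8)) := exp_le_exp.mpr (by
        nlinarith [mul_le_mul_of_nonneg_left hL (zero_le_one.trans hs),
          mul_nonneg (mul_nonneg hc₀ (zero_le_one.trans hs)) (zero_le_one.trans hL)])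

lemma sum_ite_le_card_mul_add {ι : Type*} [Fintype ι] (P : ι → Prop) [DecidablePred P]
    {a : ℝ} (b : ℝ) (ha : 0 ≤ a) :
    ∑ i, (if P i then a else b)
      ≤ Fintype.card ι * a + (Finset.univ.filter fun i => ¬ P i).card * b := by
  rw [Finset.sum_ite, Finset.sum_const, Finset.sum_const, nsmul_eq_mul, nsmul_eq_mul]
  gcongr
  exact_mod_cast Finset.card_le_univ _

lemma sum_exp_neg_ite_le {p s : ℕ} {c₀ : ℝ} (hc₀ : 0 ≤ c₀) (β : Fin p → ℝ)
    (hs : s = (Finset.univ.filter fun j => β j ≠ 0).card) (hs1 : 1 ≤ (s : ℝ))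
    (hL : 1 ≤ log p) :
    ∑ j, 4 / 5 * exp (-(if β j = 0 then 1 + c₀ * log p else (2 + c₀) * s * log p) / 2)
      ≤ (p : ℝ) ^ (-(c₀ / 2 - 1)) + (p : ℝ) ^ (-(c₀ * s) / 8) := by
  have hp : (0 : ℝ) < p := Nat.cast_pos.mpr (Nat.pos_of_ne_zero (by rintro rfl; norm_num at hL))
  simp only [apply_ite (fun t => 4 / 5 * exp (-t / 2))]
  refine (sum_ite_le_card_mul_add _ _ (by positivity)).trans ?_
  rw [Fintype.card_fin, ← hs]
  refine add_le_add (mul_exp_neg_one_add_mul_log_le_rpow hp) ?_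
  rw [rpow_def_of_pos hp]
  exact mul_exp_neg_two_add_mul_le_exp hs1 hL hc₀

/-- Sign recovery for the hard-thresholded sparse Bayesian learning estimator under an
orthogonal design: under the hypotheses of the error-bound theorem, if additionally
`min_{j : β⋆_j ≠ 0} |β⋆_j| > sqrt(M σ² s log(p)/n)`, then
`P[sign(β̃) = sign(β⋆)] ≥ 1 - p^{-c₀s/8} - e^{-s} - p^{-(c₀/2 - 1)}`, where the sign is
taken coordinatewise (`Real.sign` is `0` at `0`, `1` on positives, `-1` on negatives). -/
theorem sbl_thresholded_sign_recovery (n p : ℕ) (hn : 0 < n) (hp : 0 < p)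
    (X : Matrix (Fin n) (Fin p) ℝ)
    (x : Fin p → Fin n → ℝ) (hx : ∀ j, x j = fun i => X i j)
    (horth : ∀ j k, j ≠ k → x j ⬝ᵥ x k = 0) (hxne : ∀ j, x j ≠ 0)
    (β : Fin p → ℝ) (σ2 : NNReal) (hσ : 0 < σ2)
    (s : ℕ) (hs : s = (Finset.univ.filter fun j => β j ≠ 0).card)
    (hlogs : 1 ≤ Real.log s)
    (c₀ : ℝ) (hc₀ : 2 < c₀) (z : ℝ) (hz : z = c₀ * Real.log p)
    (c : ℝ) (hc : c = ⨅ j : Fin p, (x j ⬝ᵥ x j) / n)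
    (M : ℝ) (hM : M = 4 * (2 + c₀) / c)
    (βt : (Fin n → ℝ) → Fin p → ℝ)
    (hβt : ∀ ε j, βt ε j =
      if (σ2 : ℝ) * (x j ⬝ᵥ x j) * (1 + z) < (x j ⬝ᵥ (X.mulVec β + ε))^2
      then (x j ⬝ᵥ (X.mulVec β + ε)) / (x j ⬝ᵥ x j)
        - (σ2 : ℝ) / (x j ⬝ᵥ (X.mulVec β + ε))
      else 0)
    (hmin : ∀ j, β j ≠ 0 →
      Real.sqrt (M * σ2 * s * Real.log p / n) < |β j|) :
    ENNReal.ofReal (1 - (p : ℝ)^(-(c₀ * s) / 8) - Real.exp (-(s : ℝ))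
        - (p : ℝ)^(-(c₀ / 2 - 1))) ≤
      Measure.pi (fun _ : Fin n => gaussianReal 0 σ2)
        {ε : Fin n → ℝ | ∀ j : Fin p, Real.sign (βt ε j) = Real.sign (β j)} := by
  obtain rfl : x = Xᵀ := funext hx
  subst hz
  have hs1 : (1 : ℝ) ≤ s := by
    rcases Nat.eq_zero_or_pos s with h | h
    · norm_num [h] at hlogs
    · exact_mod_cast h
  have hL : 1 ≤ log p := hlogs.trans (log_le_log (by linarith) (by
    rw [hs]
    exact_mod_cast (Finset.card_le_univ _).trans_eq (Fintype.card_fin p)))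
  have hz0 : 0 ≤ c₀ * log p := mul_nonneg (by linarith) (by linarith)
  have htκ : 1 + c₀ * log p ≤ (2 + c₀) * s * log p := by
    nlinarith [mul_le_mul_of_nonneg_left hL (zero_le_one.trans hs1),
      mul_le_mul_of_nonneg_right hs1 hz0]
  have hc0 : 0 < c := by
    have : Nonempty (Fin p) := ⟨⟨0, hp⟩⟩
    obtain ⟨j, hj⟩ := exists_eq_ciInf_of_finite (f := fun j => Xᵀ j ⬝ᵥ Xᵀ j / n)
    rw [hc, ← hj]
    exact div_pos (dotProduct_self_pos (hxne j)) (by exact_mod_cast hn)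
  have hsignal (j) (hj : β j ≠ 0) : 2 * (√((Xᵀ j ⬝ᵥ Xᵀ j) * σ2) * √((2 + c₀) * s * log p))
      < (Xᵀ j ⬝ᵥ Xᵀ j) * |β j| := by
    refine two_mul_sqrt_mul_lt_of_sqrt_lt (C := c * n) (by positivity) ?_ σ2.2 (by positivity) ?_
    · rw [← le_div_iff₀ (by exact_mod_cast hn), hc]
      exact ciInf_le (Finite.bddBelow_range _) j
    · convert hmin j hj using 2
      rw [hM]
      field_simp
  have hu (j) : 1 ≤ if β j = 0 then 1 + c₀ * log p else (2 + c₀) * s * log p := by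
    split_ifs <;> linarith
  refine le_trans ?_ ((ofReal_one_sub_sum_le_pi_gaussianReal_iInter hσ.ne' _ hxne _ hu).trans
    (measure_mono fun ε hε j => ?_))
  · exact ENNReal.ofReal_le_ofReal (by
      linarith [sum_exp_neg_ite_le (c₀ := c₀) (by linarith) β hs hs1 hL, exp_pos (-(s : ℝ))])
  · rw [hβt]
    exact sign_thresholdedSBL_dotProduct_eq X horth hxne σ2.2 (by linarith) htκ hsignal
      (mem_iInter.mp hε) j
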